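/- arXiv:1410.7165 — 5 statements merged into one kernel-verified Lean document; each statement's English description precedes it below -/
import Mathlib

section
/- There exists a symmetric positive definite matrix J such that the spectral radius of the entrywise absolute value of I − J is at least 1 (i.e., positive definiteness does not imply walk-summability). -/
/-!
The equicorrelation matrix `J = (1 - r) I + r 𝟙𝟙ᵀ` (unit diagonal, every off-diagonal entry `r`)
is positive definite for `0 ≤ r < 1`, while `|I - J|` is `|r|` times the adjacency matrix of the
complete graph, whose all-ones eigenvector has eigenvalue `(n - 1) |r|`. For `n = 3` and
`r = 1/2` this eigenvalue is already `1`.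
-/

open scoped ENNReal NNReal Matrix

namespace Matrix

variable {ι : Type*} [DecidableEq ι]

theorem nnnorm_le_spectralRadius_of_mulVec_eq_smul [Fintype ι] {𝕜 : Type*} [NormedField 𝕜]
    (A : Matrix ι ι 𝕜) {μ : 𝕜} {v : ι → 𝕜} (hv : v ≠ 0) (hAv : A *ᵥ v = μ • v) :
    (‖μ‖₊ : ℝ≥0∞) ≤ spectralRadius 𝕜 A := by
  have hμ : μ ∈ spectrum 𝕜 A := by
    rw [← spectrum_toLin', ← Module.End.hasEigenvalue_iff_mem_spectrum]
    exact Module.End.hasEigenvalue_of_hasEigenvector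
      ⟨Module.End.mem_eigenspace_iff.2 (by simpa using hAv), hv⟩
  exact le_iSup₂ (f := fun k (_ : k ∈ spectrum 𝕜 A) => (‖k‖₊ : ℝ≥0∞)) μ hμ

theorem offDiag_const_mulVec_one [Fintype ι] {R : Type*} [Ring R] (c : R) :
    (of fun i j : ι => if i = j then 0 else c) *ᵥ 1 = (((Fintype.card ι : R) - 1) * c) • 1 := by
  ext i
  have hcard : ({j | ¬i = j} : Finset ι).card = Fintype.card ι - 1 := by
    simp [Finset.filter_ne, Finset.card_univ]
  simp [mulVec, dotProduct, Finset.sum_ite, hcard, Nat.cast_sub (Fintype.card_pos_iff.2 ⟨i⟩)]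

def equicorrelation (r : ℝ) : Matrix ι ι ℝ := of fun i j => if i = j then 1 else r

theorem equicorrelation_eq (r : ℝ) :
    equicorrelation (ι := ι) r = (1 - r) • 1 + r • vecMulVec 1 1 := by
  ext i j
  by_cases h : i = j <;> simp [equicorrelation, vecMulVec, h]

theorem isSymm_equicorrelation (r : ℝ) : (equicorrelation (ι := ι) r).IsSymm := by
  ext i j
  simp [equicorrelation, eq_comm]

theorem posDef_equicorrelation [Fintype ι] {r : ℝ} (h0 : 0 ≤ r) (h1 : r < 1) :
    (equicorrelation (ι := ι) r).PosDef := by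
  have hones : (vecMulVec 1 1 : Matrix ι ι ℝ).PosSemidef := by
    simpa using posSemidef_vecMulVec_self_star (1 : ι → ℝ)
  rw [equicorrelation_eq]
  exact (PosDef.one.smul (sub_pos.2 h1)).add_posSemidef (hones.smul h0)

theorem abs_one_sub_equicorrelation (r : ℝ) (i j : ι) :
    |(1 - equicorrelation r) i j| = if i = j then 0 else |r| := by
  by_cases h : i = j <;> simp [equicorrelation, h]

theorem ofReal_le_spectralRadius_abs_one_sub_equicorrelation [Fintype ι] [Nonempty ι] (r : ℝ) :
    ENNReal.ofReal ((Fintype.card ι - 1) * |r|) ≤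
      spectralRadius ℂ (of fun i j : ι => ((|(1 - equicorrelation r) i j| : ℝ) : ℂ)) := by
  have hnonneg : 0 ≤ (Fintype.card ι - 1 : ℝ) * |r| :=
    mul_nonneg (sub_nonneg.2 (Nat.one_le_cast.2 Fintype.card_pos)) (abs_nonneg r)
  have hcoe : (((Fintype.card ι - 1) * |r| : ℝ) : ℂ) = ((Fintype.card ι : ℂ) - 1) * (|r| : ℝ) := by
    push_cast
    ring
  simp only [abs_one_sub_equicorrelation, apply_ite, Complex.ofReal_zero]
  calc ENNReal.ofReal ((Fintype.card ι - 1) * |r|)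
      = ‖(((Fintype.card ι - 1) * |r| : ℝ) : ℂ)‖₊ := by
        rw [Complex.nnnorm_real, Real.nnnorm_of_nonneg hnonneg,
          ENNReal.ofReal_eq_coe_nnreal hnonneg]
    _ ≤ _ := by
      rw [hcoe]
      exact nnnorm_le_spectralRadius_of_mulVec_eq_smul _ one_ne_zero (offDiag_const_mulVec_one _)

end Matrix

theorem stmt_5 :
    ∃ (n : ℕ) (J : Matrix (Fin n) (Fin n) ℝ), J.IsSymm ∧ J.PosDef ∧
      1 ≤ spectralRadius ℂ
        (Matrix.of fun i j : Fin n =>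
          ((|((1 : Matrix (Fin n) (Fin n) ℝ) - J) i j| : ℝ) : ℂ)) := by
  refine ⟨3, Matrix.equicorrelation (1 / 2), Matrix.isSymm_equicorrelation _,
    Matrix.posDef_equicorrelation (by norm_num) (by norm_num), ?_⟩
  calc (1 : ℝ≥0∞) = ENNReal.ofReal ((Fintype.card (Fin 3) - 1) * |1 / 2|) := by norm_num
    _ ≤ _ := Matrix.ofReal_le_spectralRadius_abs_one_sub_equicorrelation _
end

section
/- For a real symmetric n×n matrix J, if the spectral radius of the entrywise absolute value of R = I − J is strictly less than 1, then J is positive definite. -/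
/-!
Write `R = 1 - J`. Entrywise `|(R ^ m) i j| ≤ (|R| ^ m) i j`, so in the `ℓ∞` operator norm
`‖R ^ m‖ ≤ ‖|R| ^ m‖`, and Gelfand's formula gives `ρ(R) ≤ ρ(|R|) < 1`. Every eigenvalue `λ` of the
symmetric matrix `J` gives the eigenvalue `1 - λ` of `R`, hence `|1 - λ| < 1` and `λ > 0`.
-/

open Matrix
open scoped Matrix.Norms.Operator ENNReal

theorem spectralRadius_le_of_forall_norm_pow_le {A : Type*} [NormedRing A] [NormedAlgebra ℂ A]
    [CompleteSpace A] {a b : A} (h : ∀ m : ℕ, ‖a ^ m‖ ≤ ‖b ^ m‖) :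
    spectralRadius ℂ a ≤ spectralRadius ℂ b :=
  le_of_tendsto_of_tendsto' (spectrum.pow_nnnorm_pow_one_div_tendsto_nhds_spectralRadius a)
    (spectrum.pow_nnnorm_pow_one_div_tendsto_nhds_spectralRadius b) fun m =>
      ENNReal.rpow_le_rpow (by exact_mod_cast h m) (by positivity)

namespace Matrix

variable {ι : Type*} [Fintype ι] [DecidableEq ι]

theorem abs_pow_apply_le {α : Type*} [CommRing α] [LinearOrder α] [IsStrictOrderedRing α]
    (A : Matrix ι ι α) (m : ℕ) (i j : ι) : |(A ^ m) i j| ≤ (A.map abs ^ m) i j := by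
  induction m generalizing i j with
  | zero => by_cases h : i = j <;> simp [h]
  | succ m ih =>
    simp only [pow_succ, mul_apply]
    refine (Finset.abs_sum_le_sum_abs _ _).trans (Finset.sum_le_sum fun k _ => ?_)
    rw [abs_mul]
    exact mul_le_mul_of_nonneg_right (ih i k) (abs_nonneg _)

theorem linfty_opNorm_mono {m n α β : Type*} [Fintype m] [Fintype n] [SeminormedAddCommGroup α]
    [SeminormedAddCommGroup β] {A : Matrix m n α} {B : Matrix m n β}
    (h : ∀ i j, ‖A i j‖ ≤ ‖B i j‖) : ‖A‖ ≤ ‖B‖ := by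
  rw [← coe_nnnorm, ← coe_nnnorm, NNReal.coe_le_coe, linfty_opNNNorm_def, linfty_opNNNorm_def]
  exact Finset.sup_mono_fun fun i _ => Finset.sum_le_sum fun j _ => h i j

theorem algebraMap_mem_spectrum_map {K L : Type*} [Field K] [Field L] [Algebra K L]
    {A : Matrix ι ι K} {r : K} (h : r ∈ spectrum K A) :
    algebraMap K L r ∈ spectrum L (A.map (algebraMap K L)) := by
  rw [mem_spectrum_iff_isRoot_charpoly] at h ⊢
  exact charpoly_map A (algebraMap K L) ▸ h.map

theorem spectralRadius_map_ofReal_le_abs (R : Matrix ι ι ℝ) :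
    spectralRadius ℂ (R.map ((↑) : ℝ → ℂ)) ≤
      spectralRadius ℂ (R.map fun x => ((|x| : ℝ) : ℂ)) := by
  have : CompleteSpace (Matrix ι ι ℂ) := FiniteDimensional.complete ℂ _
  refine spectralRadius_le_of_forall_norm_pow_le fun m => linfty_opNorm_mono fun i j => ?_
  have hmap : ∀ M : Matrix ι ι ℝ, M.map ((↑) : ℝ → ℂ) ^ m = (M ^ m).map (↑) := fun M =>
    (map_pow Complex.ofRealHom.mapMatrix M m).symm
  change ‖(R.map ((↑) : ℝ → ℂ) ^ m) i j‖ ≤ ‖((R.map abs).map ((↑) : ℝ → ℂ) ^ m) i j‖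
  rw [hmap, hmap, map_apply, map_apply, Complex.norm_real, Complex.norm_real, Real.norm_eq_abs,
    Real.norm_eq_abs]
  exact (abs_pow_apply_le R m i j).trans (le_abs_self _)

theorem posDef_of_spectralRadius_one_sub_lt_one {J : Matrix ι ι ℝ} (hJ : J.IsHermitian)
    (h : spectralRadius ℂ ((1 - J).map ((↑) : ℝ → ℂ)) < 1) : J.PosDef := by
  refine hJ.posDef_iff_eigenvalues_pos.mpr fun i => ?_
  have hmem : ((1 - hJ.eigenvalues i : ℝ) : ℂ) ∈ spectrum ℂ ((1 - J).map ((↑) : ℝ → ℂ)) := by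
    refine algebraMap_mem_spectrum_map (L := ℂ) ?_
    have := Set.sub_mem_sub (Set.mem_singleton (1 : ℝ)) (hJ.eigenvalues_mem_spectrum_real i)
    rwa [spectrum.singleton_sub_eq, map_one] at this
  have hlt : (‖((1 - hJ.eigenvalues i : ℝ) : ℂ)‖₊ : ℝ≥0∞) < 1 :=
    (le_iSup₂ (α := ℝ≥0∞) _ hmem).trans_lt h
  rw [ENNReal.coe_lt_one_iff, ← NNReal.coe_lt_one, coe_nnnorm, Complex.norm_real,
    Real.norm_eq_abs] at hlt
  linarith [(abs_lt.mp hlt).2]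

end Matrix

theorem stmt_6 (n : ℕ) (J : Matrix (Fin n) (Fin n) ℝ) (hsymm : J.IsSymm)
    (hρ : spectralRadius ℂ
        (Matrix.of fun i j : Fin n =>
          ((|((1 : Matrix (Fin n) (Fin n) ℝ) - J) i j| : ℝ) : ℂ)) < 1) :
    J.PosDef :=
  posDef_of_spectralRadius_one_sub_lt_one (isHermitian_iff_isSymm.mpr hsymm)
    ((spectralRadius_map_ofReal_le_abs (1 - J)).trans_lt hρ)
end

section
/- For the 9×9 thin-membrane matrix J = [[L,E,E],[E,L,E],[E,E,L]] with L = (a+5b)I₃ − b·T and E the 3×3 matrix with −b at positions (1,1),(1,2),(2,1),(2,3),(3,2),(3,3) (where T is the 3×3 tridiagonal 0/1 adjacency of the path), assuming a,b > 0, the (1,1) diagonal entry of J⁻¹ equals (b/(a²+8ab−3b²))·(a/b + a/(a+3b) + 5a/(3(a+6b)) + 1/3). -/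
open Matrix

/-- The 9×9 thin-membrane information matrix of Eq. (8). -/
def J9 (a b : ℝ) : Matrix (Fin 9) (Fin 9) ℝ :=
  !![a+5*b, -b,    0,     -b,    -b,    0,     -b,    -b,    0;
     -b,    a+5*b, -b,    -b,    0,     -b,    -b,    0,     -b;
     0,     -b,    a+5*b, 0,     -b,    -b,    0,     -b,    -b;
     -b,    -b,    0,     a+5*b, -b,    0,     -b,    -b,    0;
     -b,    0,     -b,    -b,    a+5*b, -b,    -b,    0,     -b;
     0,     -b,    -b,    0,     -b,    a+5*b, 0,     -b,    -b;
     -b,    -b,    0,     -b,    -b,    0,     a+5*b, -b,    0;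
     -b,    0,     -b,    -b,    0,     -b,    -b,    a+5*b, -b;
     0,     -b,    -b,    0,     -b,    -b,    0,     -b,    a+5*b]

set_option maxHeartbeats 2000000 in
/-- `(3*(a+3b)*(a+5b)*(a+6b)*(a^2+8ab-3b^2))` times the inverse of `J9`. -/
def N9 (a b : ℝ) : Matrix (Fin 9) (Fin 9) ℝ :=
  !![
     (a+5*b)*(a+6*b)*(a^2+8*a*b+6*b^2) + 2*(a+3*b)*(a+5*b)*(a^2+8*a*b-3*b^2),
     3*b*(a+3*b)*(a+5*b)*(a+6*b),
     9*b^2*(a+5*b)*(a+6*b),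
     (a+5*b)*(a+6*b)*(a^2+8*a*b+6*b^2) - (a+3*b)*(a+5*b)*(a^2+8*a*b-3*b^2),
     3*b*(a+3*b)*(a+5*b)*(a+6*b),
     9*b^2*(a+5*b)*(a+6*b),
     (a+5*b)*(a+6*b)*(a^2+8*a*b+6*b^2) - (a+3*b)*(a+5*b)*(a^2+8*a*b-3*b^2),
     3*b*(a+3*b)*(a+5*b)*(a+6*b),
     9*b^2*(a+5*b)*(a+6*b);
     3*b*(a+3*b)*(a+5*b)*(a+6*b),
     (a+3*b)^2*(a+5*b)*(a+6*b) + 2*(a+3*b)*(a+6*b)*(a^2+8*a*b-3*b^2),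
     3*b*(a+3*b)*(a+5*b)*(a+6*b),
     3*b*(a+3*b)*(a+5*b)*(a+6*b),
     (a+3*b)^2*(a+5*b)*(a+6*b) - (a+3*b)*(a+6*b)*(a^2+8*a*b-3*b^2),
     3*b*(a+3*b)*(a+5*b)*(a+6*b),
     3*b*(a+3*b)*(a+5*b)*(a+6*b),
     (a+3*b)^2*(a+5*b)*(a+6*b) - (a+3*b)*(a+6*b)*(a^2+8*a*b-3*b^2),
     3*b*(a+3*b)*(a+5*b)*(a+6*b);
     9*b^2*(a+5*b)*(a+6*b),
     3*b*(a+3*b)*(a+5*b)*(a+6*b),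
     (a+5*b)*(a+6*b)*(a^2+8*a*b+6*b^2) + 2*(a+3*b)*(a+5*b)*(a^2+8*a*b-3*b^2),
     9*b^2*(a+5*b)*(a+6*b),
     3*b*(a+3*b)*(a+5*b)*(a+6*b),
     (a+5*b)*(a+6*b)*(a^2+8*a*b+6*b^2) - (a+3*b)*(a+5*b)*(a^2+8*a*b-3*b^2),
     9*b^2*(a+5*b)*(a+6*b),
     3*b*(a+3*b)*(a+5*b)*(a+6*b),
     (a+5*b)*(a+6*b)*(a^2+8*a*b+6*b^2) - (a+3*b)*(a+5*b)*(a^2+8*a*b-3*b^2);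
     (a+5*b)*(a+6*b)*(a^2+8*a*b+6*b^2) - (a+3*b)*(a+5*b)*(a^2+8*a*b-3*b^2),
     3*b*(a+3*b)*(a+5*b)*(a+6*b),
     9*b^2*(a+5*b)*(a+6*b),
     (a+5*b)*(a+6*b)*(a^2+8*a*b+6*b^2) + 2*(a+3*b)*(a+5*b)*(a^2+8*a*b-3*b^2),
     3*b*(a+3*b)*(a+5*b)*(a+6*b),
     9*b^2*(a+5*b)*(a+6*b),
     (a+5*b)*(a+6*b)*(a^2+8*a*b+6*b^2) - (a+3*b)*(a+5*b)*(a^2+8*a*b-3*b^2),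
     3*b*(a+3*b)*(a+5*b)*(a+6*b),
     9*b^2*(a+5*b)*(a+6*b);
     3*b*(a+3*b)*(a+5*b)*(a+6*b),
     (a+3*b)^2*(a+5*b)*(a+6*b) - (a+3*b)*(a+6*b)*(a^2+8*a*b-3*b^2),
     3*b*(a+3*b)*(a+5*b)*(a+6*b),
     3*b*(a+3*b)*(a+5*b)*(a+6*b),
     (a+3*b)^2*(a+5*b)*(a+6*b) + 2*(a+3*b)*(a+6*b)*(a^2+8*a*b-3*b^2),
     3*b*(a+3*b)*(a+5*b)*(a+6*b),
     3*b*(a+3*b)*(a+5*b)*(a+6*b),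
     (a+3*b)^2*(a+5*b)*(a+6*b) - (a+3*b)*(a+6*b)*(a^2+8*a*b-3*b^2),
     3*b*(a+3*b)*(a+5*b)*(a+6*b);
     9*b^2*(a+5*b)*(a+6*b),
     3*b*(a+3*b)*(a+5*b)*(a+6*b),
     (a+5*b)*(a+6*b)*(a^2+8*a*b+6*b^2) - (a+3*b)*(a+5*b)*(a^2+8*a*b-3*b^2),
     9*b^2*(a+5*b)*(a+6*b),
     3*b*(a+3*b)*(a+5*b)*(a+6*b),
     (a+5*b)*(a+6*b)*(a^2+8*a*b+6*b^2) + 2*(a+3*b)*(a+5*b)*(a^2+8*a*b-3*b^2),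
     9*b^2*(a+5*b)*(a+6*b),
     3*b*(a+3*b)*(a+5*b)*(a+6*b),
     (a+5*b)*(a+6*b)*(a^2+8*a*b+6*b^2) - (a+3*b)*(a+5*b)*(a^2+8*a*b-3*b^2);
     (a+5*b)*(a+6*b)*(a^2+8*a*b+6*b^2) - (a+3*b)*(a+5*b)*(a^2+8*a*b-3*b^2),
     3*b*(a+3*b)*(a+5*b)*(a+6*b),
     9*b^2*(a+5*b)*(a+6*b),
     (a+5*b)*(a+6*b)*(a^2+8*a*b+6*b^2) - (a+3*b)*(a+5*b)*(a^2+8*a*b-3*b^2),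
     3*b*(a+3*b)*(a+5*b)*(a+6*b),
     9*b^2*(a+5*b)*(a+6*b),
     (a+5*b)*(a+6*b)*(a^2+8*a*b+6*b^2) + 2*(a+3*b)*(a+5*b)*(a^2+8*a*b-3*b^2),
     3*b*(a+3*b)*(a+5*b)*(a+6*b),
     9*b^2*(a+5*b)*(a+6*b);
     3*b*(a+3*b)*(a+5*b)*(a+6*b),
     (a+3*b)^2*(a+5*b)*(a+6*b) - (a+3*b)*(a+6*b)*(a^2+8*a*b-3*b^2),
     3*b*(a+3*b)*(a+5*b)*(a+6*b),
     3*b*(a+3*b)*(a+5*b)*(a+6*b),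
     (a+3*b)^2*(a+5*b)*(a+6*b) - (a+3*b)*(a+6*b)*(a^2+8*a*b-3*b^2),
     3*b*(a+3*b)*(a+5*b)*(a+6*b),
     3*b*(a+3*b)*(a+5*b)*(a+6*b),
     (a+3*b)^2*(a+5*b)*(a+6*b) + 2*(a+3*b)*(a+6*b)*(a^2+8*a*b-3*b^2),
     3*b*(a+3*b)*(a+5*b)*(a+6*b);
     9*b^2*(a+5*b)*(a+6*b),
     3*b*(a+3*b)*(a+5*b)*(a+6*b),
     (a+5*b)*(a+6*b)*(a^2+8*a*b+6*b^2) - (a+3*b)*(a+5*b)*(a^2+8*a*b-3*b^2),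
     9*b^2*(a+5*b)*(a+6*b),
     3*b*(a+3*b)*(a+5*b)*(a+6*b),
     (a+5*b)*(a+6*b)*(a^2+8*a*b+6*b^2) - (a+3*b)*(a+5*b)*(a^2+8*a*b-3*b^2),
     9*b^2*(a+5*b)*(a+6*b),
     3*b*(a+3*b)*(a+5*b)*(a+6*b),
     (a+5*b)*(a+6*b)*(a^2+8*a*b+6*b^2) + 2*(a+3*b)*(a+5*b)*(a^2+8*a*b-3*b^2)]


section
variable {CVα : Type*}
@[local simp] lemma cv9_5 (x : CVα) (u : Fin 8 → CVα) : vecCons x u (5 : Fin 9) = u 4 := rfl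
@[local simp] lemma cv9_6 (x : CVα) (u : Fin 8 → CVα) : vecCons x u (6 : Fin 9) = u 5 := rfl
@[local simp] lemma cv9_7 (x : CVα) (u : Fin 8 → CVα) : vecCons x u (7 : Fin 9) = u 6 := rfl
@[local simp] lemma cv9_8 (x : CVα) (u : Fin 8 → CVα) : vecCons x u (8 : Fin 9) = u 7 := rfl
@[local simp] lemma cv8_5 (x : CVα) (u : Fin 7 → CVα) : vecCons x u (5 : Fin 8) = u 4 := rfl
@[local simp] lemma cv8_6 (x : CVα) (u : Fin 7 → CVα) : vecCons x u (6 : Fin 8) = u 5 := rfl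
@[local simp] lemma cv8_7 (x : CVα) (u : Fin 7 → CVα) : vecCons x u (7 : Fin 8) = u 6 := rfl
@[local simp] lemma cv7_5 (x : CVα) (u : Fin 6 → CVα) : vecCons x u (5 : Fin 7) = u 4 := rfl
@[local simp] lemma cv7_6 (x : CVα) (u : Fin 6 → CVα) : vecCons x u (6 : Fin 7) = u 5 := rfl
@[local simp] lemma cv6_5 (x : CVα) (u : Fin 5 → CVα) : vecCons x u (5 : Fin 6) = u 4 := rfl

set_option maxHeartbeats 2000000 in
theorem J9_mul_N9 (a b : ℝ) :
    J9 a b * N9 a b =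
      (3*(a+3*b)*(a+5*b)*(a+6*b)*(a^2+8*a*b-3*b^2)) • (1 : Matrix (Fin 9) (Fin 9) ℝ) := by
  ext i j
  fin_cases i <;> fin_cases j <;>
    · simp [J9, N9, Matrix.mul_apply, Fin.sum_univ_succ, Matrix.smul_apply, Matrix.one_apply]
      ring

set_option maxHeartbeats 1000000 in
theorem stmt_17 (a b : ℝ) (ha : 0 < a) (hb : 0 < b) :
    (J9 a b)⁻¹ 0 0 =
      b / (a ^ 2 + 8 * a * b - 3 * b ^ 2) *
        (a / b + a / (a + 3 * b) + 5 * a / (3 * (a + 6 * b)) + 1 / 3) := by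
  have h1 : a + 3 * b ≠ 0 := by positivity
  have h2 : a + 5 * b ≠ 0 := by positivity
  have h3 : a + 6 * b ≠ 0 := by positivity
  have hb' : b ≠ 0 := ne_of_gt hb
  by_cases hD : a ^ 2 + 8 * a * b - 3 * b ^ 2 = 0
  · -- singular case: J9 is not invertible, both sides are 0
    have hker : (J9 a b) *ᵥ ![3*b, a+3*b, 3*b, 3*b, a+3*b, 3*b, 3*b, a+3*b, 3*b] = 0 := by
      funext i
      fin_cases i <;>
        · simp [J9, Matrix.mulVec, dotProduct, Fin.sum_univ_succ]
          first
            | linear_combination hD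
            | linear_combination -hD
            | ring
    have hnu : ¬ IsUnit (J9 a b).det := by
      intro h
      have h0 : ![3*b, a+3*b, 3*b, 3*b, a+3*b, 3*b, 3*b, a+3*b, 3*b] = (0 : Fin 9 → ℝ) := by
        calc ![3*b, a+3*b, 3*b, 3*b, a+3*b, 3*b, 3*b, a+3*b, 3*b]
            = ((J9 a b)⁻¹ * J9 a b) *ᵥ ![3*b, a+3*b, 3*b, 3*b, a+3*b, 3*b, 3*b, a+3*b, 3*b] := by
              rw [(J9 a b).nonsing_inv_mul h, Matrix.one_mulVec]
          _ = (J9 a b)⁻¹ *ᵥ ((J9 a b) *ᵥ ![3*b, a+3*b, 3*b, 3*b, a+3*b, 3*b, 3*b, a+3*b, 3*b]) := by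
              rw [Matrix.mulVec_mulVec]
          _ = 0 := by rw [hker, Matrix.mulVec_zero]
      have h01 := congrFun h0 1
      simp at h01
      linarith
    rw [Matrix.nonsing_inv_apply_not_isUnit _ hnu, hD]
    simp
  · set c : ℝ := 3*(a+3*b)*(a+5*b)*(a+6*b)*(a^2+8*a*b-3*b^2) with hc
    have hcne : c ≠ 0 := by
      rw [hc]
      exact mul_ne_zero (by positivity) hD
    have hMul : J9 a b * (c⁻¹ • N9 a b) = 1 := by
      rw [Matrix.mul_smul, J9_mul_N9, smul_smul, inv_mul_cancel₀ hcne, one_smul]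
    rw [Matrix.inv_eq_right_inv hMul]
    show c⁻¹ * ((a+5*b)*(a+6*b)*(a^2+8*a*b+6*b^2) + 2*(a+3*b)*(a+5*b)*(a^2+8*a*b-3*b^2)) = _
    rw [hc]
    field_simp
    ring

end
end

section
/- Let J be a real symmetric positive definite n×n matrix whose associated graph is a tree T (J_{ij} ≠ 0 iff {i,j} is an edge of T or i=j). For a vertex α with neighbor set N(α): (J⁻¹)_{αα} = (J_{αα} − ∑_{β∈N(α)} J_{αβ}² · γ_{β∖α})⁻¹, where γ_{β∖α} := ((J with row/column α removed)⁻¹)_{ββ}, and moreover γ_{β∖α} depends only on the subtree of T∖{α} containing β. -/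
/-!
Removing `α` splits `T` into subtrees, and `J_{∖α}` vanishes between different subtrees, so its
inverse does too. Hence `γ_{β∖α}` only sees the subtree of `β`, and `(J_{∖α})⁻¹` has no entries
between distinct neighbours of `α`, which lie in different subtrees. `(J⁻¹)_{αα}` is the inverse of
the Schur complement `J_{αα} - bᵀ (J_{∖α})⁻¹ b`, `b = J_{∖α,α}`, whose quadratic form therefore
collapses to the sum over `N(α)`.
-/

namespace Matrix

theorem inv_apply_self_eq_inv_schur {m K : Type*} [Fintype m] [DecidableEq m] [Field K]
    {M : Matrix m m K} (hM : IsUnit M) (a : m)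
    (hA : IsUnit (M.toBlock (· ≠ a) (· ≠ a))) :
    M⁻¹ a a = (M a a - (fun i : {i // i ≠ a} => M a i) ᵥ*
      (M.toBlock (· ≠ a) (· ≠ a))⁻¹ ⬝ᵥ fun j : {i // i ≠ a} => M j a)⁻¹ := by
  set A := M.toBlock (· ≠ a) (· ≠ a)
  let B : Matrix {i // i ≠ a} Unit K := of fun i _ => M i a
  let C : Matrix Unit {i // i ≠ a} K := of fun _ j => M a j
  let D : Matrix Unit Unit K := of fun _ _ => M a a
  let e := Equiv.subtypeNeSumPUnit.{0} a
  have hblocks : M.submatrix e e = fromBlocks A B C D := by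
    ext (i | i) (j | j) <;> rfl
  let := hA.invertible
  let : Invertible (fromBlocks A B C D) :=
    (hblocks ▸ (isUnit_submatrix_equiv e e).mpr hM : IsUnit (fromBlocks A B C D)).invertible
  let := invertibleOfFromBlocks₁₁Invertible A B C D
  have hcorner : M⁻¹ a a = ⅟(D - C * ⅟A * B) () () := by
    calc M⁻¹ a a = (M.submatrix e e)⁻¹ (.inr ()) (.inr ()) := by rw [inv_submatrix_equiv]; rfl
      _ = _ := by rw [hblocks, ← invOf_eq_nonsing_inv, invOf_fromBlocks₁₁_eq]; rfl
  rw [hcorner, invOf_eq_nonsing_inv, invOf_eq_nonsing_inv, inv_subsingleton, diagonal_apply_eq,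
    Ring.inverse_eq_inv']
  rfl

theorem vecMul_dotProduct_eq_sum_sq {ι R : Type*} [Fintype ι] [CommSemiring R] (v : ι → R)
    (K : Matrix ι ι R) (s : Finset ι) (hv : ∀ i ∉ s, v i = 0)
    (hK : ∀ i ∈ s, ∀ j ∈ s, i ≠ j → K i j = 0) :
    v ᵥ* K ⬝ᵥ v = ∑ i ∈ s, v i ^ 2 * K i i := by
  rw [dotProduct, ← Finset.sum_subset s.subset_univ fun j _ hj => by simp [hv j hj]]
  refine Finset.sum_congr rfl fun j hj => ?_
  rw [vecMul, dotProduct, Finset.sum_eq_single j (fun i _ hij => ?_) (by simp)]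
  · ring
  · by_cases hi : i ∈ s
    · simp [hK i hi j hj hij]
    · simp [hv i hi]

theorem apply_eq_zero_of_not_reachable {ι R : Type*} [Zero R] {G : SimpleGraph ι}
    {M : Matrix ι ι R} (hM : ∀ i j, i ≠ j → M i j ≠ 0 → G.Adj i j) {i j : ι}
    (h : ¬ G.Reachable i j) : M i j = 0 := by
  by_contra hij
  obtain rfl | hne := eq_or_ne i j
  · exact h (.refl i)
  · exact h (hM i j hne hij).reachable

section Reachable

variable {ι R : Type*} [Fintype ι] [DecidableEq ι] [CommRing R] {G : SimpleGraph ι}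
  {M : Matrix ι ι R} [Invertible M]

theorem inv_apply_eq_zero_of_not_reachable (hM : ∀ i j, ¬ G.Reachable i j → M i j = 0)
    {i j : ι} (h : ¬ G.Reachable i j) : M⁻¹ i j = 0 := by
  -- Ordering the vertices by `¬ G.Reachable · j` (in `Prop`) makes `M` block triangular.
  have hblock : M.BlockTriangular fun k => ¬ G.Reachable k j := by
    intro k l hlk
    obtain ⟨hk, hl⟩ :=
      Classical.not_imp.mp (hlk.not_ge : ¬ (¬ G.Reachable k j → ¬ G.Reachable l j))
    exact hM k l fun hkl => hk (hkl.trans (not_not.mp hl))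
  refine blockTriangular_inv_of_blockTriangular hblock (lt_of_le_not_ge ?_ ?_)
  · exact fun hj => (hj .rfl).elim
  · exact fun hi => hi h .rfl

theorem inv_toBlock_reachable [DecidableRel G.Reachable]
    (hM : ∀ i j, ¬ G.Reachable i j → M i j = 0) (c : ι) :
    (M.toBlock (G.Reachable · c) (G.Reachable · c))⁻¹ =
      M⁻¹.toBlock (G.Reachable · c) (G.Reachable · c) := by
  refine inv_eq_left_inv ?_
  have hcross : M.toBlock (¬ G.Reachable · c) (G.Reachable · c) = 0 := by
    ext ⟨k, hk⟩ ⟨l, hl⟩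
    exact hM k l fun hkl => hk (hkl.trans hl)
  rw [← add_zero (_ * _), ← Matrix.mul_zero (M⁻¹.toBlock _ fun k => ¬ G.Reachable k c), ← hcross,
    ← toBlock_mul_eq_add, inv_mul_of_invertible, toBlock_one_self]

end Reachable

end Matrix

theorem SimpleGraph.IsAcyclic.not_reachable_comap_ne {V : Type*} {G : SimpleGraph V}
    (hG : G.IsAcyclic) {a : V} {x y : {v // v ≠ a}} (hx : G.Adj a x) (hy : G.Adj a y)
    (hxy : x ≠ y) : ¬ (G.comap (Subtype.val : {v // v ≠ a} → V)).Reachable x y := by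
  classical
  rintro ⟨w⟩
  let f : G.comap (Subtype.val : {v // v ≠ a} → V) →g G := ⟨Subtype.val, id⟩
  let q : G.Path x y := ⟨.cons hx.symm (.cons hy .nil), by
    simp [Walk.isPath_def, x.2, Ne.symm y.2, Subtype.val_injective.ne hxy]⟩
  have hq : (w.map f).toPath = q := (hG.subsingleton_path x y).elim _ _
  have ha : a ∈ (w.map f).support :=
    Walk.support_toPath_subset_support _ (by rw [hq]; simp [q])
  obtain ⟨z, -, hz⟩ := List.mem_map.mp (Walk.support_map f w ▸ ha)
  exact z.2 hz

open Classical in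
/-- Gaussian belief propagation on a tree: the cycle-resummation formula for `(J⁻¹)_{αα}`
(self-loop plus backtracks to the neighbors of `α`), and the fact that the quantity
`γ_{β∖α} = ((J_{∖α})⁻¹)_{ββ}` only depends on the connected component (subtree) of
`T ∖ {α}` containing `β`. -/
theorem stmt_18 (n : ℕ) (T : SimpleGraph (Fin n)) (hT : T.IsTree)
    (J : Matrix (Fin n) (Fin n) ℝ) (hJ : J.PosDef)
    (hsp : ∀ i j : Fin n, i ≠ j → (J i j ≠ 0 ↔ T.Adj i j)) (α : Fin n) :
    J⁻¹ α α =
      (J α α -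
        ∑ β ∈ Finset.univ.filter (fun β : {i : Fin n // i ≠ α} => T.Adj α β.val),
          J α β.val ^ 2 *
            (J.submatrix (fun x : {i : Fin n // i ≠ α} => x.val) (fun x => x.val))⁻¹ β β)⁻¹ ∧
    ∀ β : {i : Fin n // i ≠ α}, T.Adj α β.val →
      (J.submatrix (fun x : {i : Fin n // i ≠ α} => x.val) (fun x => x.val))⁻¹ β β =
        (J.submatrix
            (fun y : {x : {i : Fin n // i ≠ α} //
                (SimpleGraph.comap Subtype.val T).Reachable x β} => y.val.val)
            (fun y : {x : {i : Fin n // i ≠ α} //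
                (SimpleGraph.comap Subtype.val T).Reachable x β} => y.val.val))⁻¹
          ⟨β, SimpleGraph.Reachable.refl β⟩ ⟨β, SimpleGraph.Reachable.refl β⟩ := by
  set A := J.toBlock (· ≠ α) (· ≠ α)
  have hA : A.PosDef := hJ.submatrix Subtype.val_injective
  let := hA.isUnit.invertible
  have hA_zero : ∀ i j, ¬ (T.comap Subtype.val).Reachable i j → A i j = 0 := fun _ _ =>
    Matrix.apply_eq_zero_of_not_reachable (G := T.comap Subtype.val) (M := A) fun i j hij =>
      (hsp i j (Subtype.val_injective.ne hij)).mp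
  refine ⟨?_, fun β _ => ?_⟩
  · have hsym : (fun j : {i // i ≠ α} => J j α) = fun j : {i // i ≠ α} => J α j :=
      funext fun j => hJ.isHermitian.apply α j
    rw [Matrix.inv_apply_self_eq_inv_schur hJ.isUnit α hA.isUnit, hsym]
    congr 2
    refine Matrix.vecMul_dotProduct_eq_sum_sq _ _ _ (fun x hx => ?_) fun x hx y hy hxy => ?_
    · by_contra h
      exact hx (Finset.mem_filter.mpr ⟨Finset.mem_univ _, (hsp _ _ (Ne.symm x.2)).mp h⟩)
    · simp only [Finset.mem_filter, Finset.mem_univ, true_and] at hx hy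
      exact Matrix.inv_apply_eq_zero_of_not_reachable hA_zero
        (hT.isAcyclic.not_reachable_comap_ne hx hy hxy)
  · exact congrFun (congrFun (Matrix.inv_toBlock_reachable hA_zero β).symm ⟨β, .refl β⟩)
      ⟨β, .refl β⟩
end

section
/- Let J be a real symmetric positive definite n×n matrix whose graph is a tree, and let α, β, δ be vertices with β ∈ N(α) and δ ∈ N(β), δ ≠ α. Then ((J_{∖{α,β}})⁻¹)_{δδ} = ((J_{∖β})⁻¹)_{δδ}; i.e., deleting α in addition to β does not change the diagonal inverse entry at δ. -/
open Matrix

/-- A principal submatrix (along an injective map) of a positive definite real matrix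
is positive definite. -/
lemma posDef_submatrix_of_injective {ι κ : Type*} [Fintype ι] [Fintype κ]
    {M : Matrix ι ι ℝ} (hM : M.PosDef) (f : κ → ι) (hf : Function.Injective f) :
    (M.submatrix f f).PosDef := by
  classical
  rw [posDef_iff_dotProduct_mulVec] at hM ⊢
  constructor
  · show (M.submatrix f f)ᴴ = _
    rw [conjTranspose_submatrix, hM.1]
  · intro x hx
    set y : ι → ℝ := Function.extend f x 0 with hy
    have hyf : ∀ k, y (f k) = x k := fun k => hf.extend_apply x 0 k
    have hy0 : ∀ i, i ∉ Set.range f → y i = 0 := by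
      intro i hi
      rw [hy, Function.extend_apply' _ _ _ (by simpa [Set.range] using hi)]
      rfl
    have key : ∀ (h : ι → ℝ), (∀ i, i ∉ Set.range f → h i = 0) →
        ∑ i, h i = ∑ k, h (f k) := by
      intro h hh
      have h1 : ∑ i ∈ Finset.univ.image f, h i = ∑ i, h i :=
        Finset.sum_subset (Finset.subset_univ _)
          (fun i _ hi => hh i (by simpa [Set.range, Finset.mem_image, eq_comm] using hi))
      rw [← h1, Finset.sum_image (fun a _ b _ h => hf h)]
    have hyne : y ≠ 0 := by
      obtain ⟨k, hk⟩ := Function.ne_iff.mp hx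
      exact Function.ne_iff.mpr ⟨f k, by simpa [hyf k] using hk⟩
    have hpos := hM.2 hyne
    have hcalc : dotProduct (star x) ((M.submatrix f f) *ᵥ x)
        = dotProduct (star y) (M *ᵥ y) := by
      have houter := key (fun i => y i * ∑ j, M i j * y j)
        (fun i hi => by simp [hy0 i hi])
      have hstep : ∀ k, y (f k) * ∑ j, M (f k) j * y j
          = x k * ∑ l, M (f k) (f l) * x l := by
        intro k
        rw [hyf, key (fun j => M (f k) j * y j) (fun j hj => by simp [hy0 j hj])]
        exact congrArg (x k * ·) (Finset.sum_congr rfl fun l _ => by rw [hyf])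
      simp only [dotProduct, mulVec, star_trivial, submatrix_apply]
      rw [houter]
      exact (Finset.sum_congr rfl fun k _ => (hstep k).symm)
    rw [hcalc]
    exact hpos

lemma inv_entry_reindex' {ι κ : Type*} [Fintype ι] [Fintype κ] [DecidableEq ι] [DecidableEq κ]
    (A : Matrix ι ι ℝ) (e : κ ≃ ι) (a b : κ) :
    (A.submatrix e e)⁻¹ a b = A⁻¹ (e a) (e b) := by
  rw [Matrix.inv_submatrix_equiv]
  rfl

/-- For a block-diagonal invertible matrix, the diagonal entry of the inverse within a block
equals the corresponding entry of the inverse of that block. -/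
lemma block_inv_diag {ι : Type*} [Fintype ι] [DecidableEq ι] (M : Matrix ι ι ℝ)
    (hM : IsUnit M.det) (p : ι → Prop) [DecidablePred p]
    (h0 : ∀ i j, p i → ¬ p j → M i j = 0) (h0' : ∀ i j, ¬ p i → p j → M i j = 0)
    (d : ι) (hd : p d) :
    M⁻¹ d d = (M.submatrix (fun x : {i // p i} => (x : ι))
      (fun x : {i // p i} => (x : ι)))⁻¹ ⟨d, hd⟩ ⟨d, hd⟩ := by
  set e := Equiv.sumCompl p with he
  set A := M.submatrix (fun x : {i // p i} => (x : ι)) (fun x : {i // p i} => (x : ι)) with hA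
  set D := M.submatrix (fun x : {i // ¬ p i} => (x : ι)) (fun x : {i // ¬ p i} => (x : ι)) with hD
  have hN : M.submatrix e e = Matrix.fromBlocks A 0 0 D := by
    ext i j
    cases i with
    | inl a => cases j with
      | inl b => rfl
      | inr b => exact h0 a.1 b.1 a.2 b.2
    | inr a => cases j with
      | inl b => exact h0' a.1 b.1 a.2 b.2
      | inr b => rfl
  have hdet : M.det = A.det * D.det := by
    rw [← Matrix.det_submatrix_equiv_self e M, hN, Matrix.det_fromBlocks_zero₂₁]
  rw [hdet] at hM
  have hAdet : IsUnit A.det := isUnit_of_mul_isUnit_left hM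
  have hDdet : IsUnit D.det := isUnit_of_mul_isUnit_right hM
  have hNinv : (M.submatrix e e)⁻¹ = Matrix.fromBlocks A⁻¹ 0 0 D⁻¹ := by
    rw [hN]
    apply Matrix.inv_eq_right_inv
    rw [Matrix.fromBlocks_multiply]
    simp [Matrix.mul_nonsing_inv _ hAdet, Matrix.mul_nonsing_inv _ hDdet,
      Matrix.fromBlocks_one]
  have h1 : (M.submatrix e e)⁻¹ = M⁻¹.submatrix e e := Matrix.inv_submatrix_equiv M e e
  have h2 : (M⁻¹.submatrix e e) (Sum.inl ⟨d, hd⟩) (Sum.inl ⟨d, hd⟩) = M⁻¹ d d := by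
    rw [Matrix.submatrix_apply, he, Equiv.sumCompl_apply_inl]
  rw [← h2, ← h1, hNinv]
  rfl

/-- On a tree, deleting `α` in addition to `β` does not change the diagonal inverse
entry at `δ`, for `β ∈ N(α)`, `δ ∈ N(β)`, `δ ≠ α`. -/
theorem stmt_19 (n : ℕ) (T : SimpleGraph (Fin n)) (hT : T.IsTree)
    (J : Matrix (Fin n) (Fin n) ℝ) (hJ : J.PosDef)
    (hsp : ∀ i j : Fin n, i ≠ j → (J i j ≠ 0 ↔ T.Adj i j))
    (α β δ : Fin n) (hβ : T.Adj α β) (hδ : T.Adj β δ) (hδα : δ ≠ α) :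
    (J.submatrix (fun x : {i : Fin n // i ≠ α ∧ i ≠ β} => x.val) (fun x : {i : Fin n // i ≠ α ∧ i ≠ β} => x.val))⁻¹
        ⟨δ, ⟨hδα, hδ.ne'⟩⟩ ⟨δ, ⟨hδα, hδ.ne'⟩⟩ =
      (J.submatrix (fun x : {i : Fin n // i ≠ β} => x.val) (fun x : {i : Fin n // i ≠ β} => x.val))⁻¹
        ⟨δ, hδ.ne'⟩ ⟨δ, hδ.ne'⟩ := by
  classical
  -- p i : i is connected to δ by a walk avoiding β
  set p : Fin n → Prop := fun i => ∃ w : T.Walk i δ, β ∉ w.support with hp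
  have hpδ : p δ := ⟨SimpleGraph.Walk.nil, by simpa using hδ.ne⟩
  have hstep : ∀ i j : Fin n, T.Adj i j → i ≠ β → p j → p i := by
    rintro i j hij hiβ ⟨w, hw⟩
    exact ⟨SimpleGraph.Walk.cons hij w, by
      simp only [SimpleGraph.Walk.support_cons, List.mem_cons]
      rintro (h | h)
      · exact hiβ h.symm
      · exact hw h⟩
  have hpα : ¬ p α := by
    rintro ⟨w, hw⟩
    set P := w.toPath with hP
    have hPs : β ∉ (P : T.Walk α δ).support := fun h =>
      hw (SimpleGraph.Walk.support_toPath_subset w h)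
    have hc : (SimpleGraph.Walk.cons hβ.symm (P : T.Walk α δ)).IsPath :=
      P.2.cons hPs
    have := hT.IsAcyclic.path_unique ⟨_, hc⟩ (SimpleGraph.Path.singleton hδ)
    have hmem : α ∈ (SimpleGraph.Walk.cons hβ.symm (P : T.Walk α δ)).support := by
      simp [SimpleGraph.Walk.support_cons]
    rw [show (SimpleGraph.Walk.cons hβ.symm (P : T.Walk α δ)) =
        ((⟨_, hc⟩ : T.Path β δ) : T.Walk β δ) from rfl, this] at hmem
    simp only [SimpleGraph.Path.singleton, SimpleGraph.Walk.support_cons,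
      SimpleGraph.Walk.support_nil, List.mem_cons, List.mem_singleton] at hmem
    rcases hmem with h | h | h
    · exact hβ.ne h
    · exact hδα h.symm
    · exact absurd h (List.not_mem_nil (a := α))
  -- the two principal submatrices
  set f2 : {i : Fin n // i ≠ β} → Fin n := fun x => x.val with hf2
  set f3 : {i : Fin n // i ≠ α ∧ i ≠ β} → Fin n := fun x => x.val with hf3
  set M2 := J.submatrix f2 f2 with hM2def
  set M3 := J.submatrix f3 f3 with hM3def
  have hM2 : M2.PosDef := posDef_submatrix_of_injective hJ f2 Subtype.val_injective
  have hM3 : M3.PosDef := posDef_submatrix_of_injective hJ f3 Subtype.val_injective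
  -- block structure
  have hadj_of_ne : ∀ i j : Fin n, i ≠ j → J i j ≠ 0 → T.Adj i j := fun i j h hne =>
    (hsp i j h).mp hne
  have hblock2a : ∀ x y : {i : Fin n // i ≠ β}, p x.val → ¬ p y.val → M2 x y = 0 := by
    intro x y hx hy
    by_contra hne
    rcases eq_or_ne x.val y.val with h | h
    · exact hy (h ▸ hx)
    · exact hy (hstep y.val x.val (hadj_of_ne _ _ h hne).symm y.2 hx)
  have hblock2b : ∀ x y : {i : Fin n // i ≠ β}, ¬ p x.val → p y.val → M2 x y = 0 := by
    intro x y hx hy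
    by_contra hne
    rcases eq_or_ne x.val y.val with h | h
    · exact hx (h ▸ hy)
    · exact hx (hstep x.val y.val (hadj_of_ne _ _ h hne) x.2 hy)
  have hblock3a : ∀ x y : {i : Fin n // i ≠ α ∧ i ≠ β}, p x.val → ¬ p y.val → M3 x y = 0 := by
    intro x y hx hy
    by_contra hne
    rcases eq_or_ne x.val y.val with h | h
    · exact hy (h ▸ hx)
    · exact hy (hstep y.val x.val (hadj_of_ne _ _ h hne).symm y.2.2 hx)
  have hblock3b : ∀ x y : {i : Fin n // i ≠ α ∧ i ≠ β}, ¬ p x.val → p y.val → M3 x y = 0 := by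
    intro x y hx hy
    by_contra hne
    rcases eq_or_ne x.val y.val with h | h
    · exact hx (h ▸ hy)
    · exact hx (hstep x.val y.val (hadj_of_ne _ _ h hne) x.2.2 hy)
  have key2 := block_inv_diag M2 hM2.det_pos.ne'.isUnit (fun x => p x.val)
    hblock2a hblock2b ⟨δ, hδ.ne'⟩ hpδ
  have key3 := block_inv_diag M3 hM3.det_pos.ne'.isUnit (fun x => p x.val)
    hblock3a hblock3b ⟨δ, ⟨hδα, hδ.ne'⟩⟩ hpδ
  rw [key2, key3]
  -- now relate the two blocks via an equivalence
  set E : {x : {i : Fin n // i ≠ β} // p x.val} ≃ {x : {i : Fin n // i ≠ α ∧ i ≠ β} // p x.val} :=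
    { toFun := fun x => ⟨⟨x.1.1, ⟨fun h => hpα (h ▸ x.2), x.1.2⟩⟩, x.2⟩
      invFun := fun y => ⟨⟨y.1.1, y.1.2.2⟩, y.2⟩
      left_inv := fun x => Subtype.ext (Subtype.ext rfl)
      right_inv := fun y => Subtype.ext (Subtype.ext rfl) } with hE
  have hsub : M3.submatrix (fun x : {x : {i : Fin n // i ≠ α ∧ i ≠ β} // p x.val} => (x : {i : Fin n // i ≠ α ∧ i ≠ β})) (fun x : {x : {i : Fin n // i ≠ α ∧ i ≠ β} // p x.val} => (x : {i : Fin n // i ≠ α ∧ i ≠ β}))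
      = (M2.submatrix (fun x : {x : {i : Fin n // i ≠ β} // p x.val} => (x : {i : Fin n // i ≠ β})) (fun x : {x : {i : Fin n // i ≠ β} // p x.val} => (x : {i : Fin n // i ≠ β}))).submatrix (⇑E.symm) (⇑E.symm) := by
    ext a b
    rfl
  rw [hsub, inv_entry_reindex' _ E.symm]
  congr 1
end
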